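/- For every c > 0, writing A = A(c) and ȳ = ȳ(A(c)), one has A θ² (e^{θ ȳ} + e^{−θ ȳ}) − 2 k₂ > 0; equivalently, ȳ is a strict local minimum point of the function y ↦ A e^{θ y} + A e^{−θ y} − k₂ y². -/

import Mathlib

/-!
Since `h_A` is the derivative of `y ↦ A e^{θy} + A e^{−θy} − k₂ y²`, the equation `h_A(ȳ) = 0`
reads `2 k₂ ȳ = 2 A θ sinh (θ ȳ)`. For `x > 0` we have `sinh x < x cosh x`, hence
`2 k₂ < 2 A θ² cosh (θ ȳ)`: the second derivative is positive at the critical point `ȳ`.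
The first derivative therefore changes sign from `−` to `+` at `ȳ`, and the mean value theorem
turns this into a strict local minimum.
-/

/-- `h_A(y) = A θ e^{θ y} − A θ e^{−θ y} − 2 k₂ y`. -/
noncomputable def hFun (θ k₂ A y : ℝ) : ℝ :=
  A * θ * Real.exp (θ * y) - A * θ * Real.exp (-(θ * y)) - 2 * k₂ * y

/-- `g(A) = −A e^{θ ȳ(A)} − A e^{−θ ȳ(A)} + k₂ ȳ(A)² + 2A`. -/
noncomputable def gFun (θ k₂ : ℝ) (ybar : ℝ → ℝ) (A : ℝ) : ℝ :=
  -A * Real.exp (θ * ybar A) - A * Real.exp (-(θ * ybar A)) + k₂ * (ybar A) ^ 2 + 2 * A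

open Real Filter Topology Set

theorem Real.sinh_lt_mul_cosh {x : ℝ} (hx : 0 < x) : sinh x < x * cosh x := by
  have hderiv (t : ℝ) : HasDerivAt (fun t => t * cosh t - sinh t) (t * sinh t) t :=
    (((hasDerivAt_id' t).mul (hasDerivAt_cosh t)).sub (hasDerivAt_sinh t)).congr_deriv (by ring)
  have hmono : StrictMonoOn (fun t => t * cosh t - sinh t) (Ici 0) := by
    refine strictMonoOn_of_hasDerivWithinAt_pos (convex_Ici 0) (by fun_prop)
      (fun t _ => (hderiv t).hasDerivWithinAt) fun t ht => ?_
    rw [interior_Ici, mem_Ioi] at ht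
    exact mul_pos ht (sinh_pos_iff.mpr ht)
  simpa using hmono self_mem_Ici hx.le hx

theorem eventually_lt_of_hasDerivAt_of_sign {f f' : ℝ → ℝ} {x₀ : ℝ}
    (h : ∀ᶠ x in 𝓝 x₀, HasDerivAt f (f' x) x ∧ SignType.sign (f' x) = SignType.sign (x - x₀)) :
    ∀ᶠ x in 𝓝[≠] x₀, f x₀ < f x := by
  obtain ⟨ε, hε, hball⟩ := Metric.eventually_nhds_iff_ball.1 h
  have hIcc {a b : ℝ} (ha : a ∈ Metric.ball x₀ ε) (hb : b ∈ Metric.ball x₀ ε) :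
      Icc a b ⊆ Metric.ball x₀ ε := by
    rw [Real.ball_eq_Ioo] at *
    exact Icc_subset_Ioo ha.1 hb.2
  have hmvt {a b : ℝ} (hab : a < b) (ha : a ∈ Metric.ball x₀ ε) (hb : b ∈ Metric.ball x₀ ε) :
      ∃ c ∈ Ioo a b, f' c = (f b - f a) / (b - a) :=
    exists_hasDerivAt_eq_slope f f' hab
      (fun y hy => (hball y (hIcc ha hb hy)).1.continuousAt.continuousWithinAt)
      fun y hy => (hball y (hIcc ha hb (Ioo_subset_Icc_self hy))).1
  have hx₀ : x₀ ∈ Metric.ball x₀ ε := Metric.mem_ball_self hε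
  filter_upwards [inter_mem_nhdsWithin {x₀}ᶜ (Metric.ball_mem_nhds x₀ hε)] with x ⟨hne, hx⟩
  rcases lt_or_gt_of_ne hne with hlt | hgt
  · obtain ⟨c, hc, hslope⟩ := hmvt hlt hx hx₀
    have hneg : f' c < 0 := by
      have := (hball c (hIcc hx hx₀ (Ioo_subset_Icc_self hc))).2
      rwa [sign_neg (sub_neg.2 hc.2), sign_eq_neg_one_iff] at this
    rw [hslope, div_neg_iff] at hneg
    rcases hneg with ⟨-, h⟩ | ⟨h, -⟩ <;> linarith
  · obtain ⟨c, hc, hslope⟩ := hmvt hgt hx₀ hx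
    have hpos : 0 < f' c := by
      have := (hball c (hIcc hx₀ hx (Ioo_subset_Icc_self hc))).2
      rwa [sign_pos (sub_pos.2 hc.1), sign_eq_one_iff] at this
    rw [hslope, div_pos_iff] at hpos
    rcases hpos with ⟨h, -⟩ | ⟨-, h⟩ <;> linarith

theorem eventually_lt_of_hasDerivAt_deriv_pos {f f' : ℝ → ℝ} {x₀ f'' : ℝ}
    (hf : ∀ᶠ x in 𝓝 x₀, HasDerivAt f (f' x) x) (hf' : HasDerivAt f' f'' x₀)
    (hcrit : f' x₀ = 0) (hpos : 0 < f'') : ∀ᶠ x in 𝓝[≠] x₀, f x₀ < f x :=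
  eventually_lt_of_hasDerivAt_of_sign <|
    hf.and (eventually_nhdsWithin_sign_eq_of_deriv_pos (hf'.deriv ▸ hpos) hcrit)

noncomputable def potential (θ k₂ A y : ℝ) : ℝ :=
  A * exp (θ * y) + A * exp (-(θ * y)) - k₂ * y ^ 2

theorem hasDerivAt_exp_mul (θ y : ℝ) :
    HasDerivAt (fun y => exp (θ * y)) (θ * exp (θ * y)) y := by
  simpa [mul_comm] using ((hasDerivAt_id' y).const_mul θ).exp

theorem hasDerivAt_exp_neg_mul (θ y : ℝ) :
    HasDerivAt (fun y => exp (-(θ * y))) (-θ * exp (-(θ * y))) y := by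
  simpa [mul_comm] using ((hasDerivAt_id' y).const_mul θ).neg.exp

theorem hasDerivAt_potential (θ k₂ A y : ℝ) :
    HasDerivAt (potential θ k₂ A) (hFun θ k₂ A y) y := by
  have := (((hasDerivAt_exp_mul θ y).const_mul A).add
    ((hasDerivAt_exp_neg_mul θ y).const_mul A)).sub ((hasDerivAt_pow 2 y).const_mul k₂)
  exact this.congr_deriv (by simp only [hFun]; ring)

theorem hasDerivAt_hFun (θ k₂ A y : ℝ) :
    HasDerivAt (hFun θ k₂ A) (A * θ ^ 2 * (exp (θ * y) + exp (-(θ * y))) - 2 * k₂) y := by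
  have := (((hasDerivAt_exp_mul θ y).const_mul (A * θ)).sub
    ((hasDerivAt_exp_neg_mul θ y).const_mul (A * θ))).sub ((hasDerivAt_id' y).const_mul (2 * k₂))
  exact this.congr_deriv (by ring)

theorem two_mul_lt_of_hFun_eq_zero {θ k₂ A y : ℝ} (hθ : 0 < θ) (hA : 0 < A) (hy : 0 < y)
    (hzero : hFun θ k₂ A y = 0) :
    2 * k₂ < A * θ ^ 2 * (exp (θ * y) + exp (-(θ * y))) := by
  have hsinh := sinh_lt_mul_cosh (mul_pos hθ hy)
  rw [sinh_eq, cosh_eq] at hsinh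
  have : 2 * k₂ * y < A * θ ^ 2 * (exp (θ * y) + exp (-(θ * y))) * y := by
    unfold hFun at hzero
    linarith [mul_lt_mul_of_pos_left hsinh (mul_pos hA hθ)]
  exact lt_of_mul_lt_mul_right this hy.le

theorem stmt_17_general (θ k₂ : ℝ) (hθ : 0 < θ)
    (ybarA : ℝ → ℝ)
    (hybarA : ∀ A : ℝ, 0 < A → A < k₂ / θ ^ 2 →
      0 < ybarA A ∧ hFun θ k₂ A (ybarA A) = 0)
    (Ac : ℝ → ℝ)
    (hAc : ∀ c : ℝ, 0 < c →
      0 < Ac c ∧ Ac c < k₂ / θ ^ 2 ∧ gFun θ k₂ ybarA (Ac c) = c) :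
    ∀ c : ℝ, 0 < c →
      0 < Ac c * θ ^ 2 *
          (Real.exp (θ * ybarA (Ac c)) + Real.exp (-(θ * ybarA (Ac c)))) - 2 * k₂ ∧
      (∀ᶠ y in nhdsWithin (ybarA (Ac c)) {ybarA (Ac c)}ᶜ,
        Ac c * Real.exp (θ * ybarA (Ac c)) + Ac c * Real.exp (-(θ * ybarA (Ac c))) -
            k₂ * (ybarA (Ac c)) ^ 2 <
          Ac c * Real.exp (θ * y) + Ac c * Real.exp (-(θ * y)) - k₂ * y ^ 2) := by
  intro c hc
  obtain ⟨hA, hAlt, -⟩ := hAc c hc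
  obtain ⟨hy, hcrit⟩ := hybarA (Ac c) hA hAlt
  have hcurv := sub_pos.2 (two_mul_lt_of_hFun_eq_zero hθ hA hy hcrit)
  exact ⟨hcurv, eventually_lt_of_hasDerivAt_deriv_pos
    (Eventually.of_forall (hasDerivAt_potential θ k₂ (Ac c))) (hasDerivAt_hFun θ k₂ (Ac c) _)
    hcrit hcurv⟩

theorem stmt_17 (θ k₂ : ℝ) (hθ : 0 < θ) (hk : 0 < k₂)
    (ybarA : ℝ → ℝ)
    (hybarA : ∀ A : ℝ, 0 < A → A < k₂ / θ ^ 2 →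
      0 < ybarA A ∧ hFun θ k₂ A (ybarA A) = 0)
    (Ac : ℝ → ℝ)
    (hAc : ∀ c : ℝ, 0 < c →
      0 < Ac c ∧ Ac c < k₂ / θ ^ 2 ∧ gFun θ k₂ ybarA (Ac c) = c) :
    ∀ c : ℝ, 0 < c →
      0 < Ac c * θ ^ 2 *
          (Real.exp (θ * ybarA (Ac c)) + Real.exp (-(θ * ybarA (Ac c)))) - 2 * k₂ ∧
      (∀ᶠ y in nhdsWithin (ybarA (Ac c)) {ybarA (Ac c)}ᶜ,
        Ac c * Real.exp (θ * ybarA (Ac c)) + Ac c * Real.exp (-(θ * ybarA (Ac c))) -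
            k₂ * (ybarA (Ac c)) ^ 2 <
          Ac c * Real.exp (θ * y) + Ac c * Real.exp (-(θ * y)) - k₂ * y ^ 2) :=
  stmt_17_general θ k₂ hθ ybarA hybarA Ac hAc
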